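/- For b ≥ 1, k ≥ 1 and n ≥ k, the identity Σ [binom(2h_{k+1},h_{k+1})⋯binom(2h_{k+b},h_{k+b})] / [h_1 ⋯ h_k · 4^{h_{k+1}+⋯+h_{k+b}}] = (k!/n!) · c_{b/2}(n+b/2, k+b/2) holds, where the sum is over all h_1,…,h_k ∈ ℕ_{≥1} and h_{k+1},…,h_{k+b} ∈ ℕ_{≥0} with h_1+⋯+h_{k+b} = n, and c_{b/2}(n+b/2,k+b/2) := Σ_{m=0}^{n−k} binom(n,m) c(n−m,k) (b/2)^{(m)} with c the unsigned Stirling number of the first kind and (b/2)^{(m)} the rising factorial. -/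

import Mathlib

/-!
With `L = Σ_{h ≥ 1} X^h / h = -log (1 - X)` and `G = Σ_h binom(2h, h) X^h / 4^h = (1 - X)^(-1/2)`,
the left-hand side is the coefficient of `X^n` in `L^k G^b`. The differential equations
`(1 - X) L' = 1` and `(1 - X) G' = G / 2` give `(1 - X) (L^k)' = k L^(k-1)` and
`(1 - X) (G^b)' = (b/2) G^b`, i.e. the recurrences showing that `L^k` and `G^b` are the exponential
generating functions of `k! c(n, k)` and of `(b/2)^(m)`. The coefficient of their product is the
binomial convolution on the right-hand side.
-/

open PowerSeries Finset Nat

/-- The unsigned Stirling numbers of the first kind. -/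
def stirling1 : ℕ → ℕ → ℕ
  | 0, 0 => 1
  | 0, _ + 1 => 0
  | _ + 1, 0 => 0
  | n + 1, k + 1 => n * stirling1 n (k + 1) + stirling1 n k

theorem stirling1_eq_stirlingFirst : ∀ n k : ℕ, stirling1 n k = stirlingFirst n k
  | 0, 0 | 0, _ + 1 | _ + 1, 0 => rfl
  | n + 1, k + 1 => by
    rw [stirling1, stirlingFirst_succ_succ, stirling1_eq_stirlingFirst n,
      stirling1_eq_stirlingFirst n]

theorem Fin.prod_univ_add_ite_val_lt {M : Type*} [CommMonoid M] (k b : ℕ) (x y : M) :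
    ∏ i : Fin (k + b), (if (i : ℕ) < k then x else y) = x ^ k * y ^ b := by
  simp [Fin.prod_univ_add]

theorem Finset.sum_antidiagonal_div_factorial_mul_div_factorial {K : Type*} [Field K] [CharZero K]
    (f g : ℕ → K) (n : ℕ) :
    ∑ p ∈ antidiagonal n, f p.1 / p.1 ! * (g p.2 / p.2 !) =
      (∑ m ∈ range (n + 1), n.choose m * f m * g (n - m)) / n ! := by
  rw [Nat.sum_antidiagonal_eq_sum_range_succ (fun i j => f i / i ! * (g j / j !)), sum_div]
  refine sum_congr rfl fun m hm => ?_
  have : (n ! : K) ≠ 0 := cast_ne_zero.mpr (factorial_ne_zero n)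
  rw [cast_choose K (Nat.lt_succ_iff.mp (mem_range.mp hm))]
  field_simp

namespace PowerSeries

section CommSemiring

variable {R : Type*} [CommSemiring R]

theorem coeff_prod_fin (m n : ℕ) (f : Fin m → R⟦X⟧) :
    coeff n (∏ i, f i) = ∑ h ∈ Finset.Nat.antidiagonalTuple m n, ∏ i, coeff (h i) (f i) := by
  classical
  rw [coeff_prod]
  refine (sum_equiv Finsupp.equivFunOnFinite.symm (fun h => ?_) fun h _ => rfl).symm
  simp [Finsupp.equivFunOnFinite, Finset.Nat.mem_antidiagonalTuple]

theorem coeff_X_mul_derivative (f : R⟦X⟧) (n : ℕ) : coeff n (X * d⁄dX R f) = n * coeff n f := by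
  cases n with
  | zero => simp
  | succ n => rw [coeff_succ_X_mul, coeff_derivative, mul_comm]; push_cast; ring

end CommSemiring

section CommRing

variable {R : Type*} [CommRing R]

theorem succ_mul_coeff_succ_of_one_sub_X_mul_derivative_eq {f g : R⟦X⟧}
    (h : (1 - X) * d⁄dX R f = g) (n : ℕ) :
    (n + 1) * coeff (n + 1) f = n * coeff n f + coeff n g := by
  rw [← h, sub_mul, one_mul, map_sub, coeff_derivative, coeff_X_mul_derivative]
  ring

theorem one_sub_X_mul_derivative_pow_succ (f : R⟦X⟧) (k : ℕ) :
    (1 - X) * d⁄dX R (f ^ (k + 1)) = C (k + 1 : R) * f ^ k * ((1 - X) * d⁄dX R f) := by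
  rw [Derivation.leibniz_pow, Nat.add_sub_cancel, smul_eq_mul, nsmul_eq_mul]
  simp only [map_add, map_natCast, map_one]
  push_cast
  ring

theorem one_sub_X_mul_derivative_pow_of_eq_C_mul {f : R⟦X⟧} {a : R}
    (hf : (1 - X) * d⁄dX R f = C a * f) (b : ℕ) :
    (1 - X) * d⁄dX R (f ^ b) = C (b * a) * f ^ b := by
  cases b with
  | zero => simp
  | succ b =>
    rw [one_sub_X_mul_derivative_pow_succ, hf, pow_succ]
    push_cast
    simp only [map_mul, map_add, map_natCast, map_one]
    ring

end CommRing

variable (K : Type*) [Field K]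

noncomputable def logInvOneSub : K⟦X⟧ := mk fun h => (h : K)⁻¹

noncomputable def invSqrtOneSub : K⟦X⟧ := mk fun h => ((2 * h).choose h : K) / 4 ^ h

@[simp]
theorem constantCoeff_logInvOneSub : constantCoeff (logInvOneSub K) = 0 := by
  simp [logInvOneSub, ← coeff_zero_eq_constantCoeff_apply]

@[simp]
theorem constantCoeff_invSqrtOneSub : constantCoeff (invSqrtOneSub K) = 1 := by
  simp [invSqrtOneSub, ← coeff_zero_eq_constantCoeff_apply]

theorem coeff_logInvOneSub_pow_mul_invSqrtOneSub_pow (k b n : ℕ) :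
    coeff n (logInvOneSub K ^ k * invSqrtOneSub K ^ b) =
      ∑ h ∈ Finset.Nat.antidiagonalTuple (k + b) n, ∏ i : Fin (k + b),
        (if (i : ℕ) < k then (h i : K)⁻¹ else ((2 * h i).choose (h i) : K) / 4 ^ h i) := by
  rw [← Fin.prod_univ_add_ite_val_lt, coeff_prod_fin]
  refine sum_congr rfl fun h _ => prod_congr rfl fun i _ => ?_
  split_ifs <;> simp [logInvOneSub, invSqrtOneSub]

variable [CharZero K]

theorem one_sub_X_mul_derivative_logInvOneSub : (1 - X) * d⁄dX K (logInvOneSub K) = 1 := by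
  ext n
  rw [sub_mul, one_mul, map_sub, coeff_derivative, coeff_X_mul_derivative]
  cases n with
  | zero => simp [logInvOneSub]
  | succ n =>
    have : (n + 1 + 1 : K) ≠ 0 := by exact_mod_cast succ_ne_zero (n + 1)
    have : (n + 1 : K) ≠ 0 := by exact_mod_cast succ_ne_zero n
    simp only [logInvOneSub, coeff_mk, coeff_one, succ_ne_zero, if_false]
    push_cast
    field_simp
    ring

theorem one_sub_X_mul_derivative_invSqrtOneSub :
    (1 - X) * d⁄dX K (invSqrtOneSub K) = C 2⁻¹ * invSqrtOneSub K := by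
  ext n
  rw [sub_mul, one_mul, map_sub, coeff_derivative, coeff_X_mul_derivative, coeff_C_mul]
  have hn : (n + 1 : K) ≠ 0 := by exact_mod_cast succ_ne_zero n
  have h4 : (4 : K) ^ n ≠ 0 := pow_ne_zero _ (by norm_num)
  have hrec : (n + 1 : K) * (2 * (n + 1)).choose (n + 1) = 2 * (2 * n + 1) * (2 * n).choose n := by
    exact_mod_cast succ_mul_centralBinom_succ n
  simp only [invSqrtOneSub, coeff_mk, pow_succ]
  field_simp
  linear_combination 2 * hrec

variable {K}

theorem coeff_pow_of_one_sub_X_mul_derivative_eq_one {f : K⟦X⟧}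
    (hf : (1 - X) * d⁄dX K f = 1) (h0 : constantCoeff f = 0) (k n : ℕ) :
    coeff n (f ^ k) = k ! * stirlingFirst n k / n ! := by
  induction k generalizing n with
  | zero => cases n <;> simp [coeff_one]
  | succ k ihk =>
    induction n with
    | zero => simp [h0]
    | succ n ihn =>
      have hrec := succ_mul_coeff_succ_of_one_sub_X_mul_derivative_eq
        ((one_sub_X_mul_derivative_pow_succ f k).trans (by rw [hf, mul_one])) n
      rw [coeff_C_mul, ihn, ihk] at hrec
      have hn : (n + 1 : K) ≠ 0 := by exact_mod_cast succ_ne_zero n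
      refine mul_left_cancel₀ hn (hrec.trans ?_)
      rw [stirlingFirst_succ_succ, factorial_succ n, factorial_succ k]
      push_cast
      field_simp

theorem coeff_eq_prod_div_factorial_of_one_sub_X_mul_derivative_eq_C_mul {f : K⟦X⟧} {a : K}
    (hf : (1 - X) * d⁄dX K f = C a * f) (h0 : constantCoeff f = 1) (m : ℕ) :
    coeff m f = (∏ i ∈ range m, (a + i)) / m ! := by
  induction m with
  | zero => simp [h0]
  | succ m ihm =>
    have hrec := succ_mul_coeff_succ_of_one_sub_X_mul_derivative_eq hf m
    rw [coeff_C_mul, ihm] at hrec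
    have hm : (m + 1 : K) ≠ 0 := by exact_mod_cast succ_ne_zero m
    refine mul_left_cancel₀ hm (hrec.trans ?_)
    rw [prod_range_succ, factorial_succ]
    push_cast
    field_simp
    ring

theorem coeff_logInvOneSub_pow (k n : ℕ) :
    coeff n (logInvOneSub K ^ k) = k ! * stirlingFirst n k / n ! :=
  coeff_pow_of_one_sub_X_mul_derivative_eq_one (one_sub_X_mul_derivative_logInvOneSub K)
    (constantCoeff_logInvOneSub K) k n

theorem coeff_invSqrtOneSub_pow (b m : ℕ) :
    coeff m (invSqrtOneSub K ^ b) = (∏ i ∈ range m, ((b : K) / 2 + i)) / m ! := by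
  rw [div_eq_mul_inv (b : K)]
  exact coeff_eq_prod_div_factorial_of_one_sub_X_mul_derivative_eq_C_mul
    (one_sub_X_mul_derivative_pow_of_eq_C_mul (one_sub_X_mul_derivative_invSqrtOneSub K) b)
    (by simp) m

end PowerSeries

theorem sum_compositions_eq_halfIntStirling1_general (n k b : ℕ) :
    (∑ h ∈ (Finset.Nat.antidiagonalTuple (k + b) n).filter
        (fun h => ∀ i : Fin (k + b), (i : ℕ) < k → 0 < h i),
      ∏ i : Fin (k + b),
        (if (i : ℕ) < k then ((h i : ℚ))⁻¹
          else ((2 * h i).choose (h i) : ℚ) / 4 ^ h i)) =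
      (k.factorial : ℚ) / (n.factorial : ℚ) *
        ∑ m ∈ Finset.range (n - k + 1),
          (n.choose m : ℚ) * (stirling1 (n - m) k : ℚ) *
            ∏ i ∈ Finset.range m, ((b : ℚ) / 2 + i) := by
  -- a composition with some `h i = 0`, `i < k`, contributes the factor `(0 : ℚ)⁻¹ = 0`
  have positive_of_ne_zero : ∀ h ∈ Finset.Nat.antidiagonalTuple (k + b) n,
      ∏ i : Fin (k + b), (if (i : ℕ) < k then ((h i : ℚ))⁻¹
        else ((2 * h i).choose (h i) : ℚ) / 4 ^ h i) ≠ 0 →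
      ∀ i : Fin (k + b), (i : ℕ) < k → 0 < h i := fun h _ hne i hi => by
    have := prod_ne_zero_iff.mp hne i (mem_univ i)
    simp_all [Nat.pos_iff_ne_zero]
  have extend_range : ∑ m ∈ range (n - k + 1),
      (n.choose m : ℚ) * stirlingFirst (n - m) k * ∏ i ∈ range m, ((b : ℚ) / 2 + i) =
      ∑ m ∈ range (n + 1),
        (n.choose m : ℚ) * stirlingFirst (n - m) k * ∏ i ∈ range m, ((b : ℚ) / 2 + i) := by
    refine sum_subset (range_subset_range.mpr (by omega)) fun m hm hm' => ?_
    rw [stirlingFirst_eq_zero_of_lt (by simp only [mem_range] at hm hm'; omega)]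
    simp
  rw [sum_filter_of_ne positive_of_ne_zero, ← coeff_logInvOneSub_pow_mul_invSqrtOneSub_pow,
    mul_comm, coeff_mul]
  simp only [coeff_invSqrtOneSub_pow, coeff_logInvOneSub_pow, stirling1_eq_stirlingFirst]
  refine (sum_antidiagonal_div_factorial_mul_div_factorial (fun m => ∏ i ∈ range m,
    ((b : ℚ) / 2 + i)) (fun j => (k ! : ℚ) * stirlingFirst j k) n).trans ?_
  rw [extend_range, mul_sum, sum_div]
  exact sum_congr rfl fun m _ => by ring

/-- `Σ [binom(2h_{k+1},h_{k+1})⋯binom(2h_{k+b},h_{k+b})]/[h_1⋯h_k·4^{h_{k+1}+⋯+h_{k+b}}]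
 = (k!/n!)·c_{b/2}(n+b/2, k+b/2)`, the sum being over `h_1,…,h_k ≥ 1`,
`h_{k+1},…,h_{k+b} ≥ 0` with `h_1+⋯+h_{k+b} = n`, where
`c_{b/2}(n+b/2,k+b/2) = Σ_{m=0}^{n−k} binom(n,m) c(n−m,k) (b/2)^{(m)}`. -/
theorem sum_compositions_eq_halfIntStirling1 (n k b : ℕ) (hb : 1 ≤ b) (hk : 1 ≤ k)
    (hkn : k ≤ n) :
    (∑ h ∈ (Finset.Nat.antidiagonalTuple (k + b) n).filter
        (fun h => ∀ i : Fin (k + b), (i : ℕ) < k → 0 < h i),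
      ∏ i : Fin (k + b),
        (if (i : ℕ) < k then ((h i : ℚ))⁻¹
          else ((2 * h i).choose (h i) : ℚ) / 4 ^ h i)) =
      (k.factorial : ℚ) / (n.factorial : ℚ) *
        ∑ m ∈ Finset.range (n - k + 1),
          (n.choose m : ℚ) * (stirling1 (n - m) k : ℚ) *
            ∏ i ∈ Finset.range m, ((b : ℚ) / 2 + i) :=
  sum_compositions_eq_halfIntStirling1_general n k b
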